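/- arXiv:math/0406001 — 4 statements merged into one kernel-verified Lean document; each statement's English description precedes it below -/
import Mathlib

section
/- Characteristic function of the primes: for every integer j ≥ 2, the floor (integer quotient) ⌊ lcm(1,2,...,j) / ( j · lcm(1,2,...,j-1) ) ⌋ equals 1 if j is prime and equals 0 if j is composite. -/
/-- `L m` is the least common multiple of `1, 2, ..., m`
(the lcm of the empty range is `1`). -/
def L (m : ℕ) : ℕ := (Finset.Icc 1 m).lcm id

lemma L_pos (m : ℕ) : 0 < L m := by
  rw [Nat.pos_iff_ne_zero, L, Ne, Finset.lcm_eq_zero_iff]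
  rintro ⟨x, hx, rfl⟩
  simp at hx

lemma prime_dvd_lcm {p : ℕ} (hp : p.Prime) (s : Finset ℕ) (h : p ∣ s.lcm id) :
    ∃ i ∈ s, p ∣ i := by
  induction s using Finset.induction with
  | empty => simp [Finset.lcm_empty] at h; exact absurd h hp.ne_one
  | insert _ _ ha ih =>
    rw [Finset.lcm_insert] at h
    rcases (hp.dvd_mul.mp (h.trans (Nat.lcm_dvd_mul _ _))) with h1 | h2
    · exact ⟨_, Finset.mem_insert_self _ _, h1⟩
    · obtain ⟨i, hi, hdi⟩ := ih h2
      exact ⟨i, Finset.mem_insert_of_mem hi, hdi⟩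

lemma L_succ (j : ℕ) (hj : 1 ≤ j) : L j = Nat.lcm j (L (j - 1)) := by
  have : Finset.Icc 1 j = insert j (Finset.Icc 1 (j - 1)) := by
    ext x; simp [Finset.mem_insert]; omega
  rw [L, this, Finset.lcm_insert, L]; rfl

theorem char_fun_primes (j : ℕ) (hj : 2 ≤ j) :
    (j.Prime → L j / (j * L (j - 1)) = 1) ∧
    (¬ j.Prime → L j / (j * L (j - 1)) = 0) := by
  have hL := L_succ j (by omega)
  have hpos := L_pos (j - 1)
  constructor
  · intro hp
    have hco : Nat.Coprime j (L (j - 1)) := by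
      rw [hp.coprime_iff_not_dvd]
      intro hd
      obtain ⟨i, hi, hdi⟩ := prime_dvd_lcm hp _ hd
      simp at hi
      have := Nat.le_of_dvd (by omega) hdi
      omega
    rw [hL, hco.lcm_eq_mul]
    exact Nat.div_self (by positivity)
  · intro hp
    obtain ⟨p, hpp, hpd⟩ := Nat.exists_prime_and_dvd (n := j) (by omega)
    have hpj : p ≤ j := Nat.le_of_dvd (by omega) hpd
    have hne : p ≠ j := fun h => hp (h ▸ hpp)
    have hplt : p < j := lt_of_le_of_ne hpj hne
    have h2p := hpp.two_le
    have hpL : p ∣ L (j - 1) := by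
      have : p ∈ Finset.Icc 1 (j - 1) := by simp; omega
      exact Finset.dvd_lcm this
    have hpg : p ∣ Nat.gcd j (L (j - 1)) := Nat.dvd_gcd hpd hpL
    have hg2 : 2 ≤ Nat.gcd j (L (j - 1)) := le_trans hpp.two_le (Nat.le_of_dvd
      (Nat.gcd_pos_of_pos_left _ (by omega)) hpg)
    apply Nat.div_eq_of_lt
    rw [hL]
    have hmul := Nat.gcd_mul_lcm j (L (j - 1))
    nlinarith [Nat.lcm_pos (show 0 < j by omega) hpos]
end

section
/- For every positive integer n and every integer k with 1 ≤ k < p_n (where p_n denotes the n-th prime), the integer quotient ⌊π(k)/n⌋ equals 0, where π(k) = Σ_{j=2}^{k} ⌊ lcm(1,...,j) / ( j · lcm(1,...,j-1) ) ⌋ is the prime counting function. -/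
lemma L_succ_s7 (m : ℕ) : L (m + 1) = Nat.lcm (m + 1) (L m) := by
  rw [L, L, ← Finset.insert_Icc_right_eq_Icc_add_one (by omega), Finset.lcm_insert]
  rfl

lemma dvd_L {a m : ℕ} (h1 : 1 ≤ a) (h2 : a ≤ m) : a ∣ L m :=
  Finset.dvd_lcm (by simp [Finset.mem_Icc]; omega)

lemma L_dvd_factorial (m : ℕ) : L m ∣ m.factorial := by
  apply Finset.lcm_dvd
  intro a ha
  simp only [Finset.mem_Icc] at ha
  exact Nat.dvd_factorial ha.1 ha.2

lemma term_eq (j : ℕ) (hj : 2 ≤ j) :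
    L j / (j * L (j - 1)) = if j.Prime then 1 else 0 := by
  obtain ⟨m, rfl⟩ : ∃ m, j = m + 1 := ⟨j - 1, by omega⟩
  simp only [Nat.add_sub_cancel]
  split_ifs with hp
  · have hnd : ¬ (m + 1) ∣ L m := fun h =>
      absurd ((Nat.Prime.dvd_factorial hp).mp (h.trans (L_dvd_factorial m))) (by omega)
    have hcop : Nat.Coprime (m + 1) (L m) := (Nat.Prime.coprime_iff_not_dvd hp).mpr hnd
    rw [L_succ_s7, Nat.Coprime.lcm_eq_mul hcop,
      Nat.div_self (Nat.mul_pos (by omega) (L_pos m))]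
  · -- composite case: lcm < product
    apply Nat.div_eq_of_lt
    obtain ⟨a, ha, ha2, halt⟩ := Nat.exists_dvd_of_not_prime2 (by omega) hp
    have hf : a ∣ L m := dvd_L (by omega) (by omega)
    have hg : 2 ≤ Nat.gcd (m + 1) (L m) := by
      have hd := Nat.dvd_gcd ha hf
      have : a ≤ Nat.gcd (m + 1) (L m) :=
        Nat.le_of_dvd (Nat.gcd_pos_of_pos_right _ (L_pos m)) hd
      omega
    have key : Nat.gcd (m + 1) (L m) * Nat.lcm (m + 1) (L m) = (m + 1) * L m :=
      Nat.gcd_mul_lcm _ _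
    have hlpos : 0 < Nat.lcm (m + 1) (L m) := Nat.pos_of_ne_zero (by
      simp [Nat.lcm_ne_zero, (L_pos m).ne'])
    rw [L_succ_s7]
    nlinarith [key, hg, hlpos]

theorem pi_div_eq_zero (n k : ℕ) (hn : 1 ≤ n) (hk : 1 ≤ k)
    (hkp : k < Nat.nth Nat.Prime (n - 1)) :
    (∑ j ∈ Finset.Icc 2 k, L j / (j * L (j - 1))) / n = 0 := by
  apply Nat.div_eq_of_lt
  have hsum : (∑ j ∈ Finset.Icc 2 k, L j / (j * L (j - 1)))
      = ∑ j ∈ Finset.Icc 2 k, if j.Prime then 1 else 0 := by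
    refine Finset.sum_congr rfl fun j hj => ?_
    exact term_eq j (Finset.mem_Icc.mp hj).1
  rw [hsum, ← Finset.card_filter]
  have hcount : ((Finset.Icc 2 k).filter Nat.Prime).card = Nat.count Nat.Prime (k + 1) := by
    rw [Nat.count_eq_card_filter_range]
    congr 1
    ext p
    simp only [Finset.mem_filter, Finset.mem_Icc, Finset.mem_range]
    constructor
    · rintro ⟨⟨h2, hk'⟩, hp⟩; exact ⟨by omega, hp⟩
    · rintro ⟨hk', hp⟩; exact ⟨⟨hp.two_le, by omega⟩, hp⟩
  rw [hcount]
  have hnc : ¬ (n - 1 < Nat.count Nat.Prime (k + 1)) := fun hlt => by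
    have h2 : Nat.nth Nat.Prime (n - 1) < k + 1 :=
      (Nat.lt_nth_iff_count_lt Nat.infinite_setOf_prime).mp hlt
    omega
  omega
end

section
/- General finite-sum formula for the n-th prime: let n be a positive integer and let N be a positive integer satisfying p_n ≤ N < p_{2n} (where p_m denotes the m-th prime). Then p_n = 1 + Σ_{k=1}^{N} ( 1 - ⌊π(k)/n⌋ ), where π(k) is the prime counting function. -/
theorem nth_prime_sum_formula (n N : ℕ) (hn : 1 ≤ n) (hN : 1 ≤ N)
    (h1 : Nat.nth Nat.Prime (n - 1) ≤ N) (h2 : N < Nat.nth Nat.Prime (2 * n - 1)) :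
    Nat.nth Nat.Prime (n - 1) =
      1 + ∑ k ∈ Finset.Icc 1 N, (1 - Nat.primeCounting k / n) := by
  have hinf : (setOf Nat.Prime).Infinite := Nat.infinite_setOf_prime
  have hp2 : 2 ≤ Nat.nth Nat.Prime (n - 1) := (Nat.prime_nth_prime (n - 1)).two_le
  have hkey : ∀ k : ℕ, Nat.primeCounting k < n ↔ k < Nat.nth Nat.Prime (n - 1) := by
    intro k
    have hiff := Nat.lt_nth_iff_count_lt (p := Nat.Prime) hinf (a := n - 1) (b := k + 1)
    rw [Nat.primeCounting, Nat.primeCounting']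
    omega
  have hterm : ∀ k : ℕ, (1 - Nat.primeCounting k / n)
      = if k < Nat.nth Nat.Prime (n - 1) then 1 else 0 := by
    intro k
    by_cases h : k < Nat.nth Nat.Prime (n - 1)
    · have : Nat.primeCounting k < n := (hkey k).mpr h
      rw [if_pos h, Nat.div_eq_of_lt this]
    · have : n ≤ Nat.primeCounting k := by
        have := (hkey k).not; omega
      have : 1 ≤ Nat.primeCounting k / n := (Nat.one_le_div_iff (by omega)).mpr this
      rw [if_neg h]
      omega
  rw [Finset.sum_congr rfl fun k _ => hterm k, ← Finset.card_filter]
  have : (Finset.Icc 1 N).filter (· < Nat.nth Nat.Prime (n - 1))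
      = Finset.Icc 1 (Nat.nth Nat.Prime (n - 1) - 1) := by
    ext k
    simp only [Finset.mem_filter, Finset.mem_Icc]
    omega
  rw [this, Nat.card_Icc]
  omega
end

section
/- General truncated-sum formula for the n-th prime with a lower cutoff: let n be a positive integer, let m be an integer with 1 ≤ m ≤ p_n, and let N be a positive integer satisfying p_n ≤ N < p_{2n} (where p_j denotes the j-th prime). Then p_n = m + Σ_{k=m}^{N} ( 1 - ⌊π(k)/n⌋ ), where π(k) is the prime counting function. -/
theorem nth_prime_truncated_sum_formula (n m N : ℕ) (hn : 1 ≤ n)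
    (hm1 : 1 ≤ m) (hm2 : m ≤ Nat.nth Nat.Prime (n - 1)) (hN : 1 ≤ N)
    (h1 : Nat.nth Nat.Prime (n - 1) ≤ N) (h2 : N < Nat.nth Nat.Prime (2 * n - 1)) :
    Nat.nth Nat.Prime (n - 1) =
      m + ∑ k ∈ Finset.Icc m N, (1 - Nat.primeCounting k / n) := by
  have hinf := Nat.infinite_setOf_prime
  set P := Nat.nth Nat.Prime (n - 1) with hP
  have key : ∀ k ∈ Finset.Icc m N, (1 - Nat.primeCounting k / n) = if k < P then 1 else 0 := by
    intro k hk
    simp only [Finset.mem_Icc] at hk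
    by_cases h : k < P
    · rw [if_pos h]
      have hlt : Nat.primeCounting k < n := by
        rw [Nat.primeCounting, Nat.primeCounting']
        by_contra hc
        push_neg at hc
        have h3 : n - 1 < Nat.count Nat.Prime (k + 1) := by omega
        have := (Nat.lt_nth_iff_count_lt (p := Nat.Prime) hinf).mp h3
        omega
      rw [Nat.div_eq_of_lt hlt]
    · rw [if_neg h]
      have hge : n ≤ Nat.primeCounting k := by
        rw [Nat.primeCounting, Nat.primeCounting']
        have h3 : Nat.nth Nat.Prime (n - 1) < k + 1 := by omega
        have := (Nat.lt_nth_iff_count_lt (p := Nat.Prime) hinf).mpr h3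
        omega
      have hlt : Nat.primeCounting k < 2 * n := by
        rw [Nat.primeCounting, Nat.primeCounting']
        by_contra hc
        push_neg at hc
        have h3 : 2 * n - 1 < Nat.count Nat.Prime (k + 1) := by omega
        have := (Nat.lt_nth_iff_count_lt (p := Nat.Prime) hinf).mp h3
        omega
      have hc : Nat.primeCounting k = Nat.count Nat.Prime (k+1) := rfl
      have : Nat.primeCounting k / n = 1 :=
        Nat.div_eq_of_lt_le (by omega) (by omega)
      omega
  rw [Finset.sum_congr rfl key, ← Finset.sum_filter]
  have hfilt : (Finset.Icc m N).filter (fun k => k < P) = Finset.Ico m P := by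
    ext k
    simp only [Finset.mem_filter, Finset.mem_Icc, Finset.mem_Ico]
    omega
  rw [hfilt, Finset.sum_const, Nat.card_Ico]
  simp
  omega
end
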